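/- Let e₀, e₁, e₂, e₃ be the standard basis of ℝ⁴ and define the complex null tetrad vectors in ℂ⁴: l = (e₀ + e₁)/√2, n = (e₀ − e₁)/√2, m = (e₂ + i·e₃)/√2, m̄ = (e₂ − i·e₃)/√2. For a real alternating bilinear form F on ℝ⁴ (extended complex-bilinearly to ℂ⁴), define Φ(F) = (F(l,m), ½(F(l,n) + F(m̄,m)), F(m̄,n)) ∈ ℂ³. Then Φ is an ℝ-linear bijection from the 6-dimensional real space of alternating bilinear forms on ℝ⁴ onto ℂ³. -/

import Mathlib

open Complex

noncomputable section

/-- Complex-bilinear extension of a real alternating bilinear form on `ℝ⁴`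
to `ℂ⁴`. -/
def complexify (F : AlternatingMap ℝ (Fin 4 → ℝ) ℝ (Fin 2)) (x y : Fin 4 → ℂ) : ℂ :=
  ∑ i : Fin 4, ∑ j : Fin 4,
    x i * y j * ((F ![Pi.single i 1, Pi.single j 1] : ℝ) : ℂ)

/-- The null tetrad vector `l = (e₀ + e₁)/√2` in `ℂ⁴`. -/
def tetradL : Fin 4 → ℂ := ![1 / (Real.sqrt 2 : ℂ), 1 / (Real.sqrt 2 : ℂ), 0, 0]

/-- The null tetrad vector `n = (e₀ − e₁)/√2` in `ℂ⁴`. -/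
def tetradN : Fin 4 → ℂ := ![1 / (Real.sqrt 2 : ℂ), -(1 / (Real.sqrt 2 : ℂ)), 0, 0]

/-- The null tetrad vector `m = (e₂ + i e₃)/√2` in `ℂ⁴`. -/
def tetradM : Fin 4 → ℂ := ![0, 0, 1 / (Real.sqrt 2 : ℂ), Complex.I / (Real.sqrt 2 : ℂ)]

/-- The null tetrad vector `m̄ = (e₂ − i e₃)/√2` in `ℂ⁴`. -/
def tetradMbar : Fin 4 → ℂ := ![0, 0, 1 / (Real.sqrt 2 : ℂ), -(Complex.I / (Real.sqrt 2 : ℂ))]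

/-- The Newman–Penrose scalar map `Φ(F) = (F(l,m), ½(F(l,n)+F(m̄,m)), F(m̄,n))`. -/
def npScalars (F : AlternatingMap ℝ (Fin 4 → ℝ) ℝ (Fin 2)) : ℂ × ℂ × ℂ :=
  (complexify F tetradL tetradM,
   (complexify F tetradL tetradN + complexify F tetradMbar tetradM) / 2,
   complexify F tetradMbar tetradN)

/-!
Since `F` is real, `F(l,n) = -F₀₁` is real and `F(m̄,m) = i F₂₃` is imaginary, so
`φ₁ = (-F₀₁ + i F₂₃)/2` recovers both; likewise `φ₀, φ₂ = (±F₀₂ + F₁₂)/2 + i(F₀₃ ± F₁₃)/2`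
recover the four mixed components. Hence `Φ F = 0` forces `F = 0`, and `Φ` is an injective
real-linear map between spaces of dimension `C(4,2) = 6` and `3 · 2 = 6`, hence bijective.
-/

instance Module.Finite.alternatingMap {R M N : Type*} [CommRing R]
    [AddCommGroup M] [Module R M] [Module.Free R M] [Module.Finite R M]
    [AddCommGroup N] [Module R N] [Module.Free R N] [Module.Finite R N] {n : ℕ} :
    Module.Finite R (M [⋀^Fin n]→ₗ[R] N) :=
  Module.Finite.equiv exteriorPower.alternatingMapLinearEquiv.symm

theorem Module.finrank_alternatingMap (R M N : Type*) [CommRing R] [Nontrivial R]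
    [AddCommGroup M] [Module R M] [Module.Free R M] [Module.Finite R M]
    [AddCommGroup N] [Module R N] [Module.Free R N] (n : ℕ) :
    finrank R (M [⋀^Fin n]→ₗ[R] N) = (finrank R M).choose n * finrank R N := by
  rw [exteriorPower.alternatingMapLinearEquiv.finrank_eq, finrank_linearMap,
    exteriorPower.finrank_eq]

namespace AlternatingMap

variable {R M : Type*} [CommSemiring R] [AddCommGroup M] [Module R M] {n : ℕ}

def coeff (F : (Fin n → R) [⋀^Fin 2]→ₗ[R] M) (i j : Fin n) : M :=
  F ![Pi.single i 1, Pi.single j 1]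

theorem coeff_self (F : (Fin n → R) [⋀^Fin 2]→ₗ[R] M) (i : Fin n) : F.coeff i i = 0 :=
  F.map_eq_zero_of_eq _ (i := 0) (j := 1) rfl (by decide)

theorem coeff_swap (F : (Fin n → R) [⋀^Fin 2]→ₗ[R] M) (i j : Fin n) :
    F.coeff j i = -F.coeff i j := by
  have h := F.map_swap ![Pi.single i 1, Pi.single j 1] (i := 0) (j := 1) (by decide)
  rwa [show ![Pi.single i 1, Pi.single j 1] ∘ Equiv.swap (0 : Fin 2) 1
      = ![Pi.single j (1 : R), Pi.single i 1] by ext k : 1; fin_cases k <;> rfl] at h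

theorem ext_coeff {F G : (Fin n → R) [⋀^Fin 2]→ₗ[R] M}
    (h : ∀ i j, i < j → F.coeff i j = G.coeff i j) : F = G := by
  refine (Pi.basisFun R (Fin n)).ext_alternating fun v hv => ?_
  have hbasis : (fun k => Pi.basisFun R (Fin n) (v k)) =
      ![Pi.single (v 0) 1, Pi.single (v 1) 1] := by
    ext k : 1; fin_cases k <;> simp
  rw [hbasis]
  change F.coeff (v 0) (v 1) = G.coeff (v 0) (v 1)
  rcases lt_or_gt_of_ne (hv.ne (by decide : (0 : Fin 2) ≠ 1)) with hlt | hgt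
  · exact h _ _ hlt
  · rw [coeff_swap F, coeff_swap G, h _ _ hgt]

end AlternatingMap

open AlternatingMap

variable (F : AlternatingMap ℝ (Fin 4 → ℝ) ℝ (Fin 2))

theorem complexify_eq_coeff (x y : Fin 4 → ℂ) :
    complexify F x y =
      (x 0 * y 1 - x 1 * y 0) * F.coeff 0 1 + (x 0 * y 2 - x 2 * y 0) * F.coeff 0 2 +
      (x 0 * y 3 - x 3 * y 0) * F.coeff 0 3 + (x 1 * y 2 - x 2 * y 1) * F.coeff 1 2 +
      (x 1 * y 3 - x 3 * y 1) * F.coeff 1 3 + (x 2 * y 3 - x 3 * y 2) * F.coeff 2 3 := by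
  change ∑ i, ∑ j, x i * y j * (F.coeff i j : ℂ) = _
  simp only [Fin.sum_univ_four, coeff_self, coeff_swap F _ 0, coeff_swap F 1 2, coeff_swap F 1 3,
    coeff_swap F 2 3]
  push_cast
  ring

theorem complexify_add (G : AlternatingMap ℝ (Fin 4 → ℝ) ℝ (Fin 2)) (x y : Fin 4 → ℂ) :
    complexify (F + G) x y = complexify F x y + complexify G x y := by
  simp only [complexify, AlternatingMap.add_apply, ofReal_add, mul_add, Finset.sum_add_distrib]

theorem complexify_smul (r : ℝ) (x y : Fin 4 → ℂ) :
    complexify (r • F) x y = r * complexify F x y := by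
  simp only [complexify, AlternatingMap.smul_apply, smul_eq_mul, ofReal_mul, Finset.mul_sum]
  exact Finset.sum_congr rfl fun i _ => Finset.sum_congr rfl fun j _ => by ring

theorem inv_sqrt_two_sq : ((Real.sqrt 2 : ℂ)⁻¹) ^ 2 = 1 / 2 := by
  rw [inv_pow, ← ofReal_pow, Real.sq_sqrt zero_le_two]; norm_num

theorem complexify_tetradL_tetradM : complexify F tetradL tetradM =
    (F.coeff 0 2 + F.coeff 1 2 + I * (F.coeff 0 3 + F.coeff 1 3)) / 2 := by
  simp only [complexify_eq_coeff, tetradL, tetradM, Matrix.cons_val_zero,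
    Matrix.cons_val_one, Matrix.cons_val]
  linear_combination
    (F.coeff 0 2 + F.coeff 1 2 + I * (F.coeff 0 3 + F.coeff 1 3)) * inv_sqrt_two_sq

theorem complexify_tetradL_tetradN : complexify F tetradL tetradN = -F.coeff 0 1 := by
  simp only [complexify_eq_coeff, tetradL, tetradN, Matrix.cons_val_zero,
    Matrix.cons_val_one, Matrix.cons_val]
  linear_combination (-2 * F.coeff 0 1 : ℂ) * inv_sqrt_two_sq

theorem complexify_tetradMbar_tetradM : complexify F tetradMbar tetradM = I * F.coeff 2 3 := by
  simp only [complexify_eq_coeff, tetradM, tetradMbar, Matrix.cons_val_zero,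
    Matrix.cons_val_one, Matrix.cons_val]
  linear_combination (2 * I * F.coeff 2 3) * inv_sqrt_two_sq

theorem complexify_tetradMbar_tetradN : complexify F tetradMbar tetradN =
    (F.coeff 1 2 - F.coeff 0 2 + I * (F.coeff 0 3 - F.coeff 1 3)) / 2 := by
  simp only [complexify_eq_coeff, tetradMbar, tetradN, Matrix.cons_val_zero,
    Matrix.cons_val_one, Matrix.cons_val]
  linear_combination
    (F.coeff 1 2 - F.coeff 0 2 + I * (F.coeff 0 3 - F.coeff 1 3)) * inv_sqrt_two_sq

theorem npScalars_eq : npScalars F =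
    (⟨(F.coeff 0 2 + F.coeff 1 2) / 2, (F.coeff 0 3 + F.coeff 1 3) / 2⟩,
     ⟨-F.coeff 0 1 / 2, F.coeff 2 3 / 2⟩,
     ⟨(F.coeff 1 2 - F.coeff 0 2) / 2, (F.coeff 0 3 - F.coeff 1 3) / 2⟩) := by
  simp only [npScalars, complexify_tetradL_tetradM, complexify_tetradL_tetradN,
    complexify_tetradMbar_tetradM, complexify_tetradMbar_tetradN, Prod.mk.injEq, Complex.ext_iff]
  simp only [div_ofNat_re, div_ofNat_im, add_re, add_im, sub_re, sub_im, neg_re, neg_im, mul_re,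
    mul_im, ofReal_re, ofReal_im, I_re, I_im]
  norm_num

def npScalarsLinearMap : AlternatingMap ℝ (Fin 4 → ℝ) ℝ (Fin 2) →ₗ[ℝ] ℂ × ℂ × ℂ where
  toFun := npScalars
  map_add' F G := by
    simp only [npScalars, complexify_add, Prod.mk_add_mk, add_add_add_comm, add_div]
  map_smul' r F := by
    simp only [npScalars, complexify_smul, Prod.smul_mk, real_smul, RingHom.id_apply, ← mul_add,
      mul_div_assoc]

theorem npScalarsLinearMap_injective : Function.Injective npScalarsLinearMap := by
  refine (injective_iff_map_eq_zero _).mpr fun F hF => ext_coeff fun i j hij => ?_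
  change npScalars F = 0 at hF
  simp only [npScalars_eq, Prod.mk_eq_zero, Complex.ext_iff, zero_re, zero_im] at hF
  obtain ⟨⟨h02, h03⟩, ⟨h01, h23⟩, h12, h13⟩ := hF
  change F.coeff i j = 0
  fin_cases i <;> fin_cases j <;>
    simp only [Fin.zero_eta, Fin.mk_one, Fin.reduceFinMk, Fin.reduceLT] at hij ⊢ <;> linarith

/-- The Newman–Penrose scalar map is an ℝ-linear bijection from the 6-dimensional
real space of alternating bilinear forms on `ℝ⁴` onto `ℂ³`. -/
theorem npScalars_linear_bijective :
    IsLinearMap ℝ npScalars ∧ Function.Bijective npScalars := by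
  have hdim : Module.finrank ℝ (AlternatingMap ℝ (Fin 4 → ℝ) ℝ (Fin 2)) =
      Module.finrank ℝ (ℂ × ℂ × ℂ) := by
    rw [Module.finrank_alternatingMap, Module.finrank_prod, Module.finrank_prod,
      Complex.finrank_real_complex, Module.finrank_fin_fun, Module.finrank_self]
    rfl
  exact ⟨npScalarsLinearMap.isLinear, npScalarsLinearMap_injective,
    (LinearMap.injective_iff_surjective_of_finrank_eq_finrank hdim).mp
      npScalarsLinearMap_injective⟩

end
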